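/- arXiv:2305.13790 — 2 statements merged into one kernel-verified Lean document; each statement's English description precedes it below -/
import Mathlib

section
/- Symmetric atomic deduction modulo a rewrite relation R has the cut elimination property: every sequent Γ ⊢ Δ provable in symmetric atomic deduction modulo R has a cut-free proof, i.e., a proof not using the Cut rule (indeed, a proof consisting of a single application of the Axiom rule). -/
open Relation

/--
Symmetric atomic deduction modulo a rewrite relation `R` on atomic propositions `α`.
Sequents are pairs of finite multisets of atomic propositions; `≡` is the
reflexive-symmetric-transitive closure `Relation.EqvGen R` of `R`.
The Boolean index records whether the Cut rule is allowed:
`SymDed R true Γ Δ` is provability in the full system, `SymDed R false Γ Δ`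
is provability by a cut-free proof.
-/
inductive SymDed (R : α → α → Prop) : Bool → Multiset α → Multiset α → Prop
  | ax {b : Bool} (Γ Δ : Multiset α) (A B : α)
      (h : EqvGen R A B) :
      SymDed R b (A ::ₘ Γ) (B ::ₘ Δ)
  | cut (Γ Δ : Multiset α) (C₁ C₂ : α)
      (h : EqvGen R C₁ C₂)
      (p₁ : SymDed R true Γ (C₁ ::ₘ Δ)) (p₂ : SymDed R true (C₂ ::ₘ Γ) Δ) :
      SymDed R true Γ Δ
  | contrL {b : Bool} (Γ Δ : Multiset α) (A A₁ A₂ : α)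
      (h₁ : EqvGen R A A₁) (h₂ : EqvGen R A A₂)
      (p : SymDed R b (A₁ ::ₘ A₂ ::ₘ Γ) Δ) :
      SymDed R b (A ::ₘ Γ) Δ
  | contrR {b : Bool} (Γ Δ : Multiset α) (A A₁ A₂ : α)
      (h₁ : EqvGen R A A₁) (h₂ : EqvGen R A A₂)
      (p : SymDed R b Γ (A₁ ::ₘ A₂ ::ₘ Δ)) :
      SymDed R b Γ (A ::ₘ Δ)
  | weakL {b : Bool} (Γ Δ : Multiset α) (A : α)
      (p : SymDed R b Γ Δ) :
      SymDed R b (A ::ₘ Γ) Δ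
  | weakR {b : Bool} (Γ Δ : Multiset α) (A : α)
      (p : SymDed R b Γ Δ) :
      SymDed R b Γ (A ::ₘ Δ)

/-! Provability in symmetric atomic deduction modulo `R` is the invariant "some hypothesis is
`≡`-equivalent to some conclusion": the Axiom rule establishes it, weakening and contraction
preserve it because it only depends on the `≡`-classes occurring on each side, and Cut preserves
it by transitivity through `C₁ ≡ C₂`. Conversely, a sequent with this property is an instance of
the Axiom rule, so its cut-free proof is a single axiom. -/

section

variable {α : Type*} {R : α → α → Prop}

def Linked (R : α → α → Prop) (Γ Δ : Multiset α) : Prop :=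
  ∃ A ∈ Γ, ∃ B ∈ Δ, EqvGen R A B

namespace Linked

variable {Γ Γ' Δ Δ' : Multiset α}

theorem symm (h : Linked R Γ Δ) : Linked R Δ Γ :=
  let ⟨A, hA, B, hB, hAB⟩ := h
  ⟨B, hB, A, hA, hAB.symm⟩

theorem of_covers_left (hcov : ∀ X ∈ Γ, ∃ Y ∈ Γ', EqvGen R Y X) (h : Linked R Γ Δ) :
    Linked R Γ' Δ :=
  let ⟨A, hA, B, hB, hAB⟩ := h
  let ⟨A', hA', hA'A⟩ := hcov A hA
  ⟨A', hA', B, hB, hA'A.trans _ _ _ hAB⟩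

theorem of_covers_right (hcov : ∀ X ∈ Δ, ∃ Y ∈ Δ', EqvGen R Y X) (h : Linked R Γ Δ) :
    Linked R Γ Δ' :=
  (h.symm.of_covers_left hcov).symm

theorem cons_left (A : α) (h : Linked R Γ Δ) : Linked R (A ::ₘ Γ) Δ :=
  h.of_covers_left fun X hX => ⟨X, Multiset.mem_cons_of_mem hX, EqvGen.refl X⟩

theorem cons_right (B : α) (h : Linked R Γ Δ) : Linked R Γ (B ::ₘ Δ) :=
  (h.symm.cons_left B).symm

theorem contract_left {A A₁ A₂ : α} (h₁ : EqvGen R A A₁) (h₂ : EqvGen R A A₂)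
    (h : Linked R (A₁ ::ₘ A₂ ::ₘ Γ) Δ) : Linked R (A ::ₘ Γ) Δ := by
  refine h.of_covers_left fun X hX => ?_
  rcases Multiset.mem_cons.mp hX with rfl | hX
  · exact ⟨A, Multiset.mem_cons_self A Γ, h₁⟩
  rcases Multiset.mem_cons.mp hX with rfl | hX
  · exact ⟨A, Multiset.mem_cons_self A Γ, h₂⟩
  · exact ⟨X, Multiset.mem_cons_of_mem hX, EqvGen.refl X⟩

theorem contract_right {A A₁ A₂ : α} (h₁ : EqvGen R A A₁) (h₂ : EqvGen R A A₂)
    (h : Linked R Γ (A₁ ::ₘ A₂ ::ₘ Δ)) : Linked R Γ (A ::ₘ Δ) :=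
  (h.symm.contract_left h₁ h₂).symm

theorem cut {C₁ C₂ : α} (hC : EqvGen R C₁ C₂) (h₁ : Linked R Γ (C₁ ::ₘ Δ))
    (h₂ : Linked R (C₂ ::ₘ Γ) Δ) : Linked R Γ Δ := by
  obtain ⟨A, hA, B, hB, hAB⟩ := h₁
  rcases Multiset.mem_cons.mp hB with rfl | hB
  · obtain ⟨A', hA', B', hB', hA'B'⟩ := h₂
    rcases Multiset.mem_cons.mp hA' with rfl | hA'
    · exact ⟨A, hA, B', hB', (hAB.trans _ _ _ hC).trans _ _ _ hA'B'⟩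
    · exact ⟨A', hA', B', hB', hA'B'⟩
  · exact ⟨A, hA, B, hB, hAB⟩

end Linked

namespace SymDed

theorem linked {b : Bool} {Γ Δ : Multiset α} (h : SymDed R b Γ Δ) : Linked R Γ Δ := by
  induction h with
  | ax Γ Δ A B h => exact ⟨A, Multiset.mem_cons_self A Γ, B, Multiset.mem_cons_self B Δ, h⟩
  | cut _ _ _ _ h _ _ ih₁ ih₂ => exact ih₁.cut h ih₂
  | contrL _ _ _ _ _ h₁ h₂ _ ih => exact ih.contract_left h₁ h₂
  | contrR _ _ _ _ _ h₁ h₂ _ ih => exact ih.contract_right h₁ h₂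
  | weakL _ _ A _ ih => exact ih.cons_left A
  | weakR _ _ B _ ih => exact ih.cons_right B

theorem of_linked (b : Bool) {Γ Δ : Multiset α} (h : Linked R Γ Δ) : SymDed R b Γ Δ := by
  obtain ⟨A, hA, B, hB, hAB⟩ := h
  obtain ⟨Γ', rfl⟩ := Multiset.exists_cons_of_mem hA
  obtain ⟨Δ', rfl⟩ := Multiset.exists_cons_of_mem hB
  exact ax Γ' Δ' A B hAB

end SymDed

end

/--
Symmetric atomic deduction modulo `R` has the cut elimination property:
every sequent provable in symmetric atomic deduction modulo `R` has a cut-free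
proof (a proof not using the Cut rule).
-/
theorem symDed_cut_elimination {α : Type*} (R : α → α → Prop) (Γ Δ : Multiset α)
    (h : SymDed R true Γ Δ) : SymDed R false Γ Δ :=
  SymDed.of_linked false h.linked
end

section
/- If a rewrite relation R is locally confluent and terminating, then asymmetric atomic deduction modulo R has the cut elimination property: every provable sequent has a cut-free proof. -/
/-!
By Newman's lemma `R` is confluent, so joinability `Relation.Join (ReflTransGen R)` is an
equivalence relation. Every proof, with or without cuts, then has some `A ∈ Γ` and `B ∈ Δ`
that are joinable: this is true of an axiom, is preserved by weakening and by contraction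
(a joinable reduct makes its redex joinable), and survives a cut on `C` because transitivity
of joinability lets `A ↓ C₁ ←* C →* C₂ ↓ B` collapse to `A ↓ B`. Such a pair is itself a
cut-free proof, namely an axiom.
-/

open Relation

/--
Asymmetric atomic deduction modulo a rewrite relation `R` on atomic propositions `α`.
Sequents are pairs of finite multisets of atomic propositions; `→*` is the
reflexive-transitive closure `Relation.ReflTransGen R` of `R`.
The Boolean index records whether the Cut rule is allowed:
`AsymDed R true Γ Δ` is provability in the full system, `AsymDed R false Γ Δ`
is provability by a cut-free proof.
-/
inductive AsymDed (R : α → α → Prop) : Bool → Multiset α → Multiset α → Prop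
  | ax {b : Bool} (Γ Δ : Multiset α) (A₁ A₂ C : α)
      (h₁ : ReflTransGen R A₁ C) (h₂ : ReflTransGen R A₂ C) :
      AsymDed R b (A₁ ::ₘ Γ) (A₂ ::ₘ Δ)
  | cut (Γ Δ : Multiset α) (C C₁ C₂ : α)
      (h₁ : ReflTransGen R C C₁) (h₂ : ReflTransGen R C C₂)
      (p₁ : AsymDed R true Γ (C₁ ::ₘ Δ)) (p₂ : AsymDed R true (C₂ ::ₘ Γ) Δ) :
      AsymDed R true Γ Δ
  | contrL {b : Bool} (Γ Δ : Multiset α) (A A₁ A₂ : α)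
      (h₁ : ReflTransGen R A A₁) (h₂ : ReflTransGen R A A₂)
      (p : AsymDed R b (A₁ ::ₘ A₂ ::ₘ Γ) Δ) :
      AsymDed R b (A ::ₘ Γ) Δ
  | contrR {b : Bool} (Γ Δ : Multiset α) (A A₁ A₂ : α)
      (h₁ : ReflTransGen R A A₁) (h₂ : ReflTransGen R A A₂)
      (p : AsymDed R b Γ (A₁ ::ₘ A₂ ::ₘ Δ)) :
      AsymDed R b Γ (A ::ₘ Δ)
  | weakL {b : Bool} (Γ Δ : Multiset α) (A : α)
      (p : AsymDed R b Γ Δ) :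
      AsymDed R b (A ::ₘ Γ) Δ
  | weakR {b : Bool} (Γ Δ : Multiset α) (A : α)
      (p : AsymDed R b Γ Δ) :
      AsymDed R b Γ (A ::ₘ Δ)

/-- `R` is locally confluent: one-step reducts of a common element have a common reduct. -/
def LocallyConfluent {α : Type*} (R : α → α → Prop) : Prop :=
  ∀ A B C : α, R A B → R A C →
    ∃ D, Relation.ReflTransGen R B D ∧ Relation.ReflTransGen R C D

/-- `R` is terminating: the converse relation of `R` is well-founded
(there is no infinite reduction sequence). -/
def Terminating {α : Type*} (R : α → α → Prop) : Prop :=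
  WellFounded (fun a b : α => R b a)

section Rewriting

variable {α : Type*} {R : α → α → Prop}

def Confluent (R : α → α → Prop) : Prop :=
  ∀ ⦃a b c : α⦄, ReflTransGen R a b → ReflTransGen R a c → Join (ReflTransGen R) b c

theorem LocallyConfluent.confluent (hlc : LocallyConfluent R) (hterm : Terminating R) :
    Confluent R := by
  intro a
  induction a using hterm.induction with
  | _ a ih =>
    intro b c hab hac
    rcases hab.cases_head with rfl | ⟨b₁, hab₁, hb₁b⟩
    · exact ⟨c, hac, .refl⟩
    rcases hac.cases_head with rfl | ⟨c₁, hac₁, hc₁c⟩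
    · exact ⟨b, .refl, hab⟩
    obtain ⟨e, hb₁e, hc₁e⟩ := hlc a b₁ c₁ hab₁ hac₁
    obtain ⟨f, hbf, hef⟩ := ih b₁ hab₁ hb₁b hb₁e
    obtain ⟨d, hfd, hcd⟩ := ih c₁ hac₁ (hc₁e.trans hef) hc₁c
    exact ⟨d, hbf.trans hfd, hcd⟩

theorem Confluent.equivalence_join (hconf : Confluent R) :
    Equivalence (Join (ReflTransGen R)) :=
  Relation.equivalence_join fun _ _ _ ↦ @hconf _ _ _

theorem Relation.Join.head_left {a b c : α} (hab : ReflTransGen R a b)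
    (hbc : Join (ReflTransGen R) b c) : Join (ReflTransGen R) a c :=
  let ⟨d, hbd, hcd⟩ := hbc
  ⟨d, hab.trans hbd, hcd⟩

theorem Relation.Join.head_right {a b c : α} (hbc : ReflTransGen R b c)
    (hac : Join (ReflTransGen R) a c) : Join (ReflTransGen R) a b :=
  let ⟨d, had, hcd⟩ := hac
  ⟨d, had, hbc.trans hcd⟩

end Rewriting

section Sequents

variable {α : Type*} {R : α → α → Prop} {Γ Δ : Multiset α}

def HasJoinablePair (R : α → α → Prop) (Γ Δ : Multiset α) : Prop :=
  ∃ A ∈ Γ, ∃ B ∈ Δ, Join (ReflTransGen R) A B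

theorem HasJoinablePair.cons_left (A : α) (h : HasJoinablePair R Γ Δ) :
    HasJoinablePair R (A ::ₘ Γ) Δ :=
  let ⟨A', hA', B, hB, hj⟩ := h
  ⟨A', Multiset.mem_cons_of_mem hA', B, hB, hj⟩

theorem HasJoinablePair.cons_right (B : α) (h : HasJoinablePair R Γ Δ) :
    HasJoinablePair R Γ (B ::ₘ Δ) :=
  let ⟨A, hA, B', hB', hj⟩ := h
  ⟨A, hA, B', Multiset.mem_cons_of_mem hB', hj⟩

theorem HasJoinablePair.asymDed (h : HasJoinablePair R Γ Δ) : AsymDed R false Γ Δ := by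
  obtain ⟨A, hA, B, hB, C, hAC, hBC⟩ := h
  obtain ⟨Γ', rfl⟩ := Multiset.exists_cons_of_mem hA
  obtain ⟨Δ', rfl⟩ := Multiset.exists_cons_of_mem hB
  exact .ax Γ' Δ' A B C hAC hBC

theorem HasJoinablePair.contrL {A A₁ A₂ : α} (h₁ : ReflTransGen R A A₁)
    (h₂ : ReflTransGen R A A₂) (h : HasJoinablePair R (A₁ ::ₘ A₂ ::ₘ Γ) Δ) :
    HasJoinablePair R (A ::ₘ Γ) Δ := by
  obtain ⟨A', hA', B, hB, hj⟩ := h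
  rcases Multiset.mem_cons.mp hA' with rfl | hA'
  · exact ⟨A, Multiset.mem_cons_self _ _, B, hB, hj.head_left h₁⟩
  rcases Multiset.mem_cons.mp hA' with rfl | hA'
  · exact ⟨A, Multiset.mem_cons_self _ _, B, hB, hj.head_left h₂⟩
  · exact ⟨A', Multiset.mem_cons_of_mem hA', B, hB, hj⟩

theorem HasJoinablePair.contrR {B B₁ B₂ : α} (h₁ : ReflTransGen R B B₁)
    (h₂ : ReflTransGen R B B₂) (h : HasJoinablePair R Γ (B₁ ::ₘ B₂ ::ₘ Δ)) :
    HasJoinablePair R Γ (B ::ₘ Δ) := by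
  obtain ⟨A, hA, B', hB', hj⟩ := h
  rcases Multiset.mem_cons.mp hB' with rfl | hB'
  · exact ⟨A, hA, B, Multiset.mem_cons_self _ _, hj.head_right h₁⟩
  rcases Multiset.mem_cons.mp hB' with rfl | hB'
  · exact ⟨A, hA, B, Multiset.mem_cons_self _ _, hj.head_right h₂⟩
  · exact ⟨A, hA, B', Multiset.mem_cons_of_mem hB', hj⟩

theorem Confluent.hasJoinablePair_cut (hconf : Confluent R) {C C₁ C₂ : α}
    (h₁ : ReflTransGen R C C₁) (h₂ : ReflTransGen R C C₂)
    (p₁ : HasJoinablePair R Γ (C₁ ::ₘ Δ)) (p₂ : HasJoinablePair R (C₂ ::ₘ Γ) Δ) :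
    HasJoinablePair R Γ Δ := by
  obtain ⟨A, hA, B, hB, hAB⟩ := p₁
  rcases Multiset.mem_cons.mp hB with rfl | hB
  · obtain ⟨A', hA', B', hB', hAB'⟩ := p₂
    rcases Multiset.mem_cons.mp hA' with rfl | hA'
    · have hequiv := hconf.equivalence_join
      have hBA' : Join (ReflTransGen R) B A' := hconf h₁ h₂
      exact ⟨A, hA, B', hB', hequiv.trans hAB (hequiv.trans hBA' hAB')⟩
    · exact ⟨A', hA', B', hB', hAB'⟩
  · exact ⟨A, hA, B, hB, hAB⟩

theorem Confluent.hasJoinablePair_of_asymDed (hconf : Confluent R) {b : Bool}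
    (h : AsymDed R b Γ Δ) : HasJoinablePair R Γ Δ := by
  induction h with
  | ax _ _ A₁ A₂ C h₁ h₂ =>
    exact ⟨A₁, Multiset.mem_cons_self _ _, A₂, Multiset.mem_cons_self _ _, C, h₁, h₂⟩
  | cut _ _ _ _ _ h₁ h₂ _ _ ih₁ ih₂ => exact hconf.hasJoinablePair_cut h₁ h₂ ih₁ ih₂
  | contrL _ _ _ _ _ h₁ h₂ _ ih => exact ih.contrL h₁ h₂
  | contrR _ _ _ _ _ h₁ h₂ _ ih => exact ih.contrR h₁ h₂
  | weakL _ _ A _ ih => exact ih.cons_left A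
  | weakR _ _ B _ ih => exact ih.cons_right B

end Sequents

/--
If the rewrite relation `R` is locally confluent and terminating, then
asymmetric atomic deduction modulo `R` has the cut elimination property:
every provable sequent has a cut-free proof.
-/
theorem asymDed_cut_elimination_of_locallyConfluent_terminating {α : Type*}
    (R : α → α → Prop) (hlc : LocallyConfluent R) (hterm : Terminating R)
    (Γ Δ : Multiset α) (h : AsymDed R true Γ Δ) : AsymDed R false Γ Δ :=
  ((hlc.confluent hterm).hasJoinablePair_of_asymDed h).asymDed
end
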